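/- arXiv:1609.09723 — 8 statements merged into one kernel-verified Lean document; each statement's English description precedes it below -/
import Mathlib

section
/- For every positive integer n there exists a 4×4 Hermitian complex matrix D whose entries sum to 1, such that (i) for every vector u ∈ ℂ^(4^n) all of whose entries are 0 or 1, the quadratic form ⟨u, D^{⊗n} u⟩ is a nonnegative real number (so the n-fold Kronecker power D^{⊗n} is a decoherence functional), but (ii) there exists a vector w ∈ ℂ^(4^(n+1)) all of whose entries are 0 or 1 such that ⟨w, D^{⊗(n+1)} w⟩ is a negative real number (so D^{⊗(n+1)} is not a decoherence functional). -/
/-!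
The witness lives on the corner block `l • [[1, c], [conj c, 1]]` with `c = ρ e^{iθ}`,
`θ = π / (2n)` and `l` normalizing the entry sum. An entry of `D^{⊗n}` is a product of `n`
entries of `D`, each of argument in `[-θ, θ]`, so its argument lies in `[-π/2, π/2]` and its real
part is nonnegative; as `D^{⊗n}` is Hermitian, its quadratic form at a nonnegative real vector is
then a nonnegative real. In `D^{⊗(n+1)}` the entry between the constant indices `(2, …, 2)` and
`(3, …, 3)` is `(l c)^{n+1}`, of argument `(n+1)θ = π/2 + θ`. At the indicator of these two
indices the form equals `l^{n+1} (2 + 2 ρ^{n+1} cos ((n+1)θ)) = l^{n+1} (2 - 2 ρ^{n+1} sin θ)`,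
negative for `ρ = 2 / sin θ`.
-/

open Matrix BigOperators ComplexOrder

/-- The `n`-fold Kronecker power of a 4×4 complex matrix, with rows and columns
indexed by functions `Fin n → Fin 4` via the standard identification. -/
noncomputable def kronPow (D : Matrix (Fin 4) (Fin 4) ℂ) (n : ℕ) :
    Matrix (Fin n → Fin 4) (Fin n → Fin 4) ℂ :=
  Matrix.of fun f g => ∏ k, D (f k) (g k)

open Complex

def phaseSector (a : ℝ) : Set ℂ :=
  {z | ∃ r t : ℝ, 0 ≤ r ∧ |t| ≤ a ∧ z = r * exp (t * I)}

theorem mul_mem_phaseSector {a b : ℝ} {z w : ℂ} (hz : z ∈ phaseSector a)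
    (hw : w ∈ phaseSector b) : z * w ∈ phaseSector (a + b) := by
  obtain ⟨r, t, hr, ht, rfl⟩ := hz
  obtain ⟨s, u, hs, hu, rfl⟩ := hw
  refine ⟨r * s, t + u, mul_nonneg hr hs, (abs_add_le t u).trans (add_le_add ht hu), ?_⟩
  push_cast
  rw [add_mul, exp_add]
  ring

theorem prod_mem_phaseSector {ι : Type*} {a : ℝ} (s : Finset ι) {f : ι → ℂ}
    (hf : ∀ i ∈ s, f i ∈ phaseSector a) : ∏ i ∈ s, f i ∈ phaseSector (s.card * a) := by
  classical
  induction s using Finset.induction_on with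
  | empty => exact ⟨1, 0, zero_le_one, by simp, by simp⟩
  | insert i s hi ih =>
    rw [Finset.prod_insert hi, Finset.card_insert_of_notMem hi, Nat.cast_succ, add_one_mul,
      add_comm]
    exact mul_mem_phaseSector (hf i (s.mem_insert_self i))
      (ih fun j hj => hf j (Finset.mem_insert_of_mem hj))

theorem re_nonneg_of_mem_phaseSector {a : ℝ} {z : ℂ} (hz : z ∈ phaseSector a)
    (ha : a ≤ Real.pi / 2) : 0 ≤ z.re := by
  obtain ⟨r, t, hr, ht, rfl⟩ := hz
  rw [re_ofReal_mul, exp_ofReal_mul_I_re]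
  exact mul_nonneg hr (Real.cos_nonneg_of_mem_Icc (abs_le.mp (ht.trans ha)))

theorem kronPow_mem_phaseSector {D : Matrix (Fin 4) (Fin 4) ℂ} {a : ℝ}
    (hD : ∀ i j, D i j ∈ phaseSector a) (n : ℕ) (f g : Fin n → Fin 4) :
    kronPow D n f g ∈ phaseSector (n * a) := by
  simpa [kronPow] using prod_mem_phaseSector Finset.univ fun k _ => hD (f k) (g k)

theorem kronPow_isHermitian {D : Matrix (Fin 4) (Fin 4) ℂ} (hD : D.IsHermitian) (n : ℕ) :
    (kronPow D n).IsHermitian := by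
  ext f g
  simp only [conjTranspose_apply, kronPow, of_apply, star_prod]
  exact Finset.prod_congr rfl fun k _ => hD.apply (f k) (g k)

theorem kronPow_const (D : Matrix (Fin 4) (Fin 4) ℂ) (n : ℕ) (i j : Fin 4) :
    kronPow D n (fun _ => i) (fun _ => j) = D i j ^ n := by
  simp [kronPow]

theorem Matrix.IsHermitian.nonneg_star_dotProduct_mulVec {ι : Type*} [Fintype ι]
    {M : Matrix ι ι ℂ} (hM : M.IsHermitian) (hre : ∀ i j, 0 ≤ (M i j).re)
    {u : ι → ℂ} (hu : ∀ i, 0 ≤ u i) : 0 ≤ star u ⬝ᵥ M *ᵥ u := by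
  refine nonneg_iff.mpr ⟨?_, (hM.im_star_dotProduct_mulVec_self u).symm⟩
  obtain ⟨r, rfl⟩ : ∃ r : ι → ℝ, u = fun i => (r i : ℂ) :=
    ⟨fun i => (u i).re, funext fun i => eq_re_of_ofReal_le (r := 0) (by simpa using hu i)⟩
  simp only [zero_le_real] at hu
  simp only [dotProduct, mulVec, Finset.mul_sum, re_sum]
  refine Finset.sum_nonneg fun i _ => Finset.sum_nonneg fun j _ => ?_
  simp only [Pi.star_apply, star_def, conj_ofReal, re_ofReal_mul, re_mul_ofReal]
  exact mul_nonneg (hu i) (mul_nonneg (hre i j) (hu j))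

theorem star_indicator_dotProduct_mulVec {ι : Type*} [Fintype ι] [DecidableEq ι]
    (M : Matrix ι ι ℂ) (s : Finset ι) :
    star (fun i => if i ∈ s then 1 else 0) ⬝ᵥ M *ᵥ (fun i => if i ∈ s then 1 else 0)
      = ∑ i ∈ s, ∑ j ∈ s, M i j := by
  simp [dotProduct, mulVec, apply_ite star, Finset.sum_ite_mem]

open ComplexConjugate

def cornerBlock (l : ℝ) (c : ℂ) : Matrix (Fin 4) (Fin 4) ℂ :=
  !![0, 0, 0, 0; 0, 0, 0, 0; 0, 0, l, l * c; 0, 0, l * conj c, l]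

theorem cornerBlock_isHermitian (l : ℝ) (c : ℂ) : (cornerBlock l c).IsHermitian := by
  ext i j
  fin_cases i <;> fin_cases j <;> simp [cornerBlock, mul_comm]

theorem sum_cornerBlock (l : ℝ) (c : ℂ) :
    ∑ i, ∑ j, cornerBlock l c i j = ((l * (2 + 2 * c.re) : ℝ) : ℂ) := by
  simp only [cornerBlock, of_apply, cons_val', cons_val_fin_one, Fin.sum_univ_four, cons_val_zero,
    cons_val_one, cons_val, add_zero, zero_add]
  have h := add_conj c
  push_cast at h ⊢
  linear_combination (l : ℂ) * h

theorem cornerBlock_mem_phaseSector {l ρ θ : ℝ} (hl : 0 ≤ l) (hρ : 0 ≤ ρ) (hθ : 0 ≤ θ)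
    (i j : Fin 4) : cornerBlock l (ρ * exp (θ * I)) i j ∈ phaseSector θ := by
  have h0 : (0 : ℂ) ∈ phaseSector θ := ⟨0, 0, le_rfl, by simpa, by simp⟩
  have hl' : (l : ℂ) ∈ phaseSector θ := ⟨l, 0, hl, by simpa, by simp⟩
  have hc : (l : ℂ) * (ρ * exp (θ * I)) ∈ phaseSector θ :=
    ⟨l * ρ, θ, mul_nonneg hl hρ, (abs_of_nonneg hθ).le, by push_cast; ring⟩
  have hc' : (l : ℂ) * (ρ * conj (exp (θ * I))) ∈ phaseSector θ :=
    ⟨l * ρ, -θ, mul_nonneg hl hρ, by simp [abs_of_nonneg hθ], by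
      rw [← exp_conj, map_mul, conj_ofReal, conj_I, mul_neg, ← neg_mul]; push_cast; ring⟩
  fin_cases i <;> fin_cases j <;> simp [cornerBlock, h0, hl', hc, hc']

def cornerIndicator (N : ℕ) : (Fin N → Fin 4) → ℂ :=
  fun f => if f ∈ ({fun _ => 2, fun _ => 3} : Finset (Fin N → Fin 4)) then 1 else 0

theorem star_cornerIndicator_dotProduct_kronPow_cornerBlock (l : ℝ) (c : ℂ) (N : ℕ) :
    star (cornerIndicator (N + 1)) ⬝ᵥ kronPow (cornerBlock l c) (N + 1) *ᵥ
      cornerIndicator (N + 1) = ((l ^ (N + 1) * (2 + 2 * (c ^ (N + 1)).re) : ℝ) : ℂ) := by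
  have hne : (fun _ => 2 : Fin (N + 1) → Fin 4) ≠ fun _ => 3 := fun h => by
    simpa using congrFun h 0
  unfold cornerIndicator
  rw [star_indicator_dotProduct_mulVec, Finset.sum_pair hne, Finset.sum_pair hne,
    Finset.sum_pair hne]
  simp only [kronPow_const, cornerBlock, of_apply, cons_val', cons_val, cons_val_fin_one,
    cons_val_one, cons_val_zero, mul_pow, ← map_pow]
  have h := add_conj (c ^ (N + 1))
  push_cast at h ⊢
  linear_combination (l : ℂ) ^ (N + 1) * h

theorem re_ofReal_mul_exp_pow (ρ θ : ℝ) (N : ℕ) :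
    ((ρ * exp (θ * I)) ^ N).re = ρ ^ N * Real.cos (N * θ) := by
  rw [mul_pow, ← exp_nat_mul, ← ofReal_pow, re_ofReal_mul, ← mul_assoc, ← ofReal_natCast,
    ← ofReal_mul, exp_ofReal_mul_I_re]

theorem re_pow_succ_lt_neg_one {n : ℕ} {θ : ℝ} (hθ : n * θ = Real.pi / 2)
    (hsin : 0 < Real.sin θ) : (((2 / Real.sin θ : ℝ) * exp (θ * I)) ^ (n + 1)).re < -1 := by
  set ρ := 2 / Real.sin θ
  have hcos : Real.cos ((n + 1 : ℕ) * θ) = -Real.sin θ := by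
    rw [Nat.cast_succ, add_one_mul, hθ, add_comm, Real.cos_add_pi_div_two]
  have hρ_sin : ρ * Real.sin θ = 2 := div_mul_cancel₀ 2 hsin.ne'
  have hρ : 1 ≤ ρ := one_le_two.trans (le_div_self zero_le_two hsin (Real.sin_le_one θ))
  have hρ_pow : ρ ≤ ρ ^ (n + 1) := le_self_pow₀ hρ n.succ_ne_zero
  rw [re_ofReal_mul_exp_pow, hcos]
  nlinarith

/-- For every positive integer `n` there is a 4×4 Hermitian complex matrix `D`
whose entries sum to `1`, such that the quadratic form of `D^{⊗n}` is a
nonnegative real number at every 0/1 vector, while the quadratic form of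
`D^{⊗(n+1)}` is a negative real number at some 0/1 vector. -/
theorem composable_n_times_but_not_n_plus_one (n : ℕ) (hn : 0 < n) :
    ∃ D : Matrix (Fin 4) (Fin 4) ℂ,
      D.IsHermitian ∧ (∑ i, ∑ j, D i j) = 1 ∧
      (∀ u : (Fin n → Fin 4) → ℂ, (∀ i, u i = 0 ∨ u i = 1) →
        0 ≤ star u ⬝ᵥ (kronPow D n).mulVec u) ∧
      (∃ w : (Fin (n + 1) → Fin 4) → ℂ, (∀ i, w i = 0 ∨ w i = 1) ∧
        star w ⬝ᵥ (kronPow D (n + 1)).mulVec w < 0) := by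
  obtain ⟨θ, hθ_pos, hθ⟩ : ∃ θ : ℝ, 0 < θ ∧ n * θ = Real.pi / 2 :=
    ⟨Real.pi / (2 * n), by positivity, by field_simp⟩
  have hθ_le : θ ≤ Real.pi / 2 := hθ ▸ le_mul_of_one_le_left hθ_pos.le (by exact_mod_cast hn)
  have hsin : 0 < Real.sin θ := Real.sin_pos_of_pos_of_lt_pi hθ_pos (by linarith [Real.pi_pos])
  set ρ := 2 / Real.sin θ
  have hρ : 0 < ρ := by positivity
  set c : ℂ := ρ * exp (θ * I)
  have hc : 0 ≤ c.re := by
    rw [re_ofReal_mul, exp_ofReal_mul_I_re]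
    exact mul_nonneg hρ.le (Real.cos_nonneg_of_mem_Icc ⟨by linarith, hθ_le⟩)
  set l := (2 + 2 * c.re)⁻¹
  have hl : 0 < l := by positivity
  have hD := cornerBlock_isHermitian l c
  refine ⟨cornerBlock l c, hD, ?_, fun u hu => ?_,
    ⟨cornerIndicator (n + 1), fun f => (ite_eq_or_eq _ _ _).symm, ?_⟩⟩
  · rw [sum_cornerBlock, inv_mul_cancel₀ (by positivity), ofReal_one]
  · have hsec := kronPow_mem_phaseSector (cornerBlock_mem_phaseSector hl.le hρ.le hθ_pos.le) n
    refine (kronPow_isHermitian hD n).nonneg_star_dotProduct_mulVec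
      (fun f g => re_nonneg_of_mem_phaseSector (hsec f g) hθ.le) fun f => ?_
    rcases hu f with h | h <;> simp [h]
  · rw [star_cornerIndicator_dotProduct_kronPow_cornerBlock, ← ofReal_zero, real_lt_real]
    exact mul_neg_of_pos_of_neg (pow_pos hl _) (by linarith [re_pow_succ_lt_neg_one hθ hsin])
end

section
/- Let m ≥ 1, let D be an m×m Hermitian complex matrix, and suppose there is a unit vector v ∈ ℂ^m such that ⟨v, D v⟩ < 0 (i.e., D is not positive semidefinite). Then there exists a 2m×2m positive semidefinite Hermitian complex matrix D′ whose entries sum to 1, and a 0/1 vector w ∈ ℂ^(2m²), such that ⟨w, (D ⊗ D′) w⟩ is a negative real number. In other words, the Kronecker product of D with a suitable strongly positive decoherence functional violates the positivity axiom on a 0/1 vector. -/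
open Matrix BigOperators ComplexOrder Kronecker

/-- If `D` is an `m × m` Hermitian matrix that is not positive semidefinite, as
witnessed by a unit vector `v` with `⟨v, D v⟩ < 0`, then there is a `2m × 2m`
positive semidefinite matrix `D'` whose entries sum to `1` (a strongly positive
decoherence functional) and a 0/1 vector `w` such that the quadratic form of
the Kronecker product `D ⊗ D'` at `w` is a negative real number. -/
theorem nonSP_composed_with_quantum_DF_violates_positivity
    (m : ℕ) (hm : 1 ≤ m) (D : Matrix (Fin m) (Fin m) ℂ) (hD : D.IsHermitian)
    (v : Fin m → ℂ) (hv : star v ⬝ᵥ v = 1)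
    (hneg : star v ⬝ᵥ D.mulVec v < 0) :
    ∃ D' : Matrix (Fin m × Fin 2) (Fin m × Fin 2) ℂ,
      D'.PosSemidef ∧ (∑ i, ∑ j, D' i j) = 1 ∧
      ∃ w : (Fin m × (Fin m × Fin 2)) → ℂ, (∀ i, w i = 0 ∨ w i = 1) ∧
        star w ⬝ᵥ (D ⊗ₖ D').mulVec w < 0 := by
  classical
  set x : Fin m × Fin 2 → ℂ := fun p =>
    if p.2 = 0 then (starRingEnd ℂ) (v p.1)
    else if p.1 = ⟨0, hm⟩ then 1 - ∑ j, (starRingEnd ℂ) (v j) else 0 with hxdef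
  have hS : (∑ p, x p) = 1 := by
    rw [Fintype.sum_prod_type]
    simp only [hxdef, Fin.sum_univ_two]
    simp [Finset.sum_add_distrib, Finset.sum_ite_eq']
  refine ⟨Matrix.of (fun a b => x a * (starRingEnd ℂ) (x b)), ?_, ?_, ?_⟩
  · have : (Matrix.of (fun a b => x a * (starRingEnd ℂ) (x b))) =
        (Matrix.of (fun a (_ : Unit) => x a)) * (Matrix.of (fun a (_ : Unit) => x a))ᴴ := by
      ext a b
      simp [Matrix.mul_apply, Matrix.conjTranspose_apply]
    rw [this]
    exact Matrix.posSemidef_self_mul_conjTranspose _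
  · rw [show (∑ i, ∑ j, (Matrix.of (fun a b => x a * (starRingEnd ℂ) (x b))) i j)
        = (∑ i, x i) * (∑ j, (starRingEnd ℂ) (x j)) by
      rw [Finset.sum_mul_sum]; simp]
    rw [hS, ← map_sum, hS]
    simp
  · refine ⟨fun p => if p.2 = (p.1, (0 : Fin 2)) then 1 else 0,
      fun i => by dsimp; split <;> simp, ?_⟩
    have key : star (fun p : Fin m × (Fin m × Fin 2) => if p.2 = (p.1, (0 : Fin 2)) then (1:ℂ) else 0) ⬝ᵥ
        ((D ⊗ₖ Matrix.of (fun a b => x a * (starRingEnd ℂ) (x b))).mulVec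
          (fun p => if p.2 = (p.1, (0 : Fin 2)) then 1 else 0)) = star v ⬝ᵥ D.mulVec v := by
      simp only [dotProduct, mulVec, Pi.star_apply, apply_ite (star : ℂ → ℂ), star_one,
        star_zero, kroneckerMap_apply, Matrix.of_apply, Fintype.sum_prod_type]
      simp only [Prod.mk.injEq, ite_and, mul_ite, mul_one, mul_zero, ite_mul, one_mul,
        zero_mul, Finset.sum_ite_eq', Finset.mem_univ, if_true, Finset.sum_ite_eq,
        Finset.sum_ite_irrel, Finset.sum_const_zero]
      refine Finset.sum_congr rfl fun i _ => ?_
      rw [Finset.mul_sum]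
      refine Finset.sum_congr rfl fun i' _ => ?_
      simp only [hxdef, if_pos rfl]
      simp [Complex.conj_conj, RCLike.star_def]
      ring
    rw [key]; exact hneg
end

section
/- Let λ > 1 and 0 < ε ≤ 1/(1+λ), let A be the 2×2 real matrix [[1, λ], [λ, 1]], and let D(λ, ε) = (ε/2)·A ⊗ E00 + (1/2)·(I₂ − εA) ⊗ E11 be the 4×4 complex matrix, where E00 = e₀e₀† and E11 = e₁e₁† are the diagonal rank-one projectors onto the first and second basis vectors of ℂ². Then D(λ, ε) is Hermitian, its entries sum to 1, and ⟨u, D(λ, ε) u⟩ ≥ 0 for every 0/1 vector u ∈ ℂ⁴. That is, D(λ, ε) is a decoherence functional. -/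
open Matrix BigOperators ComplexOrder Kronecker

/-- The 2×2 matrix `A = [[1, λ], [λ, 1]]`, viewed as a complex matrix. -/
noncomputable def Amat (lam : ℝ) : Matrix (Fin 2) (Fin 2) ℂ :=
  !![1, (lam : ℂ); (lam : ℂ), 1]

/-- The rank-one projector `E00 = e₀e₀†` on `ℂ²`. -/
def E00 : Matrix (Fin 2) (Fin 2) ℂ := !![1, 0; 0, 0]

/-- The rank-one projector `E11 = e₁e₁†` on `ℂ²`. -/
def E11 : Matrix (Fin 2) (Fin 2) ℂ := !![0, 0; 0, 1]

/-- The 4×4 matrix `D(λ, ε) = (ε/2)·A ⊗ E00 + (1/2)·(I₂ − εA) ⊗ E11`, with rows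
and columns indexed by pairs `(a, b) ∈ Fin 2 × Fin 2`. -/
noncomputable def Dmat (lam eps : ℝ) :
    Matrix (Fin 2 × Fin 2) (Fin 2 × Fin 2) ℂ :=
  ((eps / 2 : ℂ)) • (Amat lam ⊗ₖ E00) +
    ((1 / 2 : ℂ)) • ((1 - (eps : ℂ) • Amat lam) ⊗ₖ E11)

/-! With respect to the second tensor factor `D(λ, ε)` is block diagonal, so at `u` its quadratic
form is `(ε/2)⟨x, A x⟩ + (1/2)⟨y, (I₂ − εA) y⟩` with `x = u(·, 0)`, `y = u(·, 1)`. For 0/1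
vectors, `⟨x, A x⟩ ∈ {0, 1, 2 + 2λ}` and `⟨y, (I₂ − εA) y⟩ ∈ {0, 1 − ε, 2 − 2ε(1 + λ)}`, all
nonnegative under the hypotheses. The entries sum to `(ε/2)(2 + 2λ) + (1/2)(2 − ε(2 + 2λ)) = 1`. -/

namespace Matrix

variable {l m n p R : Type*}

theorem IsHermitian.kronecker [CommMagma R] [StarMul R] {A : Matrix m m R} {B : Matrix n n R}
    (hA : A.IsHermitian) (hB : B.IsHermitian) : (A ⊗ₖ B).IsHermitian := by
  rw [IsHermitian, conjTranspose_kronecker, hA.eq, hB.eq]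

theorem sum_sum_kronecker [Fintype l] [Fintype m] [Fintype n] [Fintype p] [CommSemiring R]
    (A : Matrix l m R) (B : Matrix n p R) :
    ∑ i, ∑ j, (A ⊗ₖ B) i j = (∑ i, ∑ j, A i j) * (∑ i, ∑ j, B i j) := by
  simp only [Fintype.sum_prod_type, kroneckerMap_apply, Finset.sum_mul_sum]

theorem star_dotProduct_kronecker_single_mulVec [Fintype m] [Fintype n] [DecidableEq n]
    [CommSemiring R] [StarRing R] (M : Matrix m m R) (b : n) (u : m × n → R) :
    star u ⬝ᵥ (M ⊗ₖ single b b 1) *ᵥ u = star (fun a => u (a, b)) ⬝ᵥ M *ᵥ fun a => u (a, b) := by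
  simp [dotProduct, mulVec, Fintype.sum_prod_type, single_apply, Finset.mul_sum, ite_and]

end Matrix

theorem E00_eq_single : E00 = single 0 0 1 := by
  ext i j; fin_cases i <;> fin_cases j <;> rfl

theorem E11_eq_single : E11 = single 1 1 1 := by
  ext i j; fin_cases i <;> fin_cases j <;> rfl

theorem Amat_isHermitian (lam : ℝ) : (Amat lam).IsHermitian := by
  ext i j; fin_cases i <;> fin_cases j <;> simp [Amat]

theorem Dmat_isHermitian (lam eps : ℝ) : (Dmat lam eps).IsHermitian := by
  have hA := Amat_isHermitian lam
  have hE00 : E00.IsHermitian := by ext i j; fin_cases i <;> fin_cases j <;> simp [E00]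
  have hE11 : E11.IsHermitian := by ext i j; fin_cases i <;> fin_cases j <;> simp [E11]
  exact ((hA.kronecker hE00).smul (by simp [IsSelfAdjoint])).add
    (((isHermitian_one.sub (hA.smul (Complex.conj_ofReal eps))).kronecker hE11).smul (by simp))

theorem sum_sum_Dmat (lam eps : ℝ) : ∑ i, ∑ j, Dmat lam eps i j = 1 := by
  simp only [Dmat, Matrix.add_apply, Matrix.smul_apply, smul_eq_mul, Finset.sum_add_distrib,
    ← Finset.mul_sum, sum_sum_kronecker]
  simp [Amat, E00, E11, Fin.sum_univ_two, one_apply]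
  ring

theorem star_dotProduct_Dmat_mulVec (lam eps : ℝ) (u : Fin 2 × Fin 2 → ℂ) :
    star u ⬝ᵥ Dmat lam eps *ᵥ u =
      (eps / 2 : ℂ) * (star (fun a => u (a, 0)) ⬝ᵥ Amat lam *ᵥ fun a => u (a, 0)) +
      (1 / 2 : ℂ) *
        (star (fun a => u (a, 1)) ⬝ᵥ (1 - (eps : ℂ) • Amat lam) *ᵥ fun a => u (a, 1)) := by
  rw [Dmat, E00_eq_single, E11_eq_single, add_mulVec, smul_mulVec, smul_mulVec, dotProduct_add,
    dotProduct_smul, dotProduct_smul, star_dotProduct_kronecker_single_mulVec,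
    star_dotProduct_kronecker_single_mulVec, smul_eq_mul, smul_eq_mul]

theorem star_dotProduct_Amat_mulVec_nonneg {lam : ℝ} (hlam : -1 ≤ lam) {v : Fin 2 → ℂ}
    (hv : ∀ i, v i = 0 ∨ v i = 1) : 0 ≤ star v ⬝ᵥ Amat lam *ᵥ v := by
  rcases hv 0 with h0 | h0 <;> rcases hv 1 with h1 | h1 <;>
    simp [dotProduct, mulVec, Fin.sum_univ_two, Amat, h0, h1, Complex.le_def]
  linarith

theorem star_dotProduct_one_sub_smul_Amat_mulVec_nonneg {lam eps : ℝ} (heps : eps ≤ 1)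
    (hsum : eps * (1 + lam) ≤ 1) {v : Fin 2 → ℂ} (hv : ∀ i, v i = 0 ∨ v i = 1) :
    0 ≤ star v ⬝ᵥ (1 - (eps : ℂ) • Amat lam) *ᵥ v := by
  rcases hv 0 with h0 | h0 <;> rcases hv 1 with h1 | h1 <;>
    simp [dotProduct, mulVec, Fin.sum_univ_two, Amat, h0, h1, Complex.le_def, one_apply] <;>
    linarith

/-- For `λ > 1` and `0 < ε ≤ 1/(1+λ)`, the matrix `D(λ, ε)` is Hermitian, its
entries sum to `1`, and its quadratic form is a nonnegative real number at every
0/1 vector; i.e. `D(λ, ε)` is a decoherence functional. -/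
theorem Dmat_is_decoherence_functional (lam eps : ℝ)
    (hlam : 1 < lam) (heps : 0 < eps) (heps' : eps ≤ 1 / (1 + lam)) :
    (Dmat lam eps).IsHermitian ∧
    (∑ i, ∑ j, Dmat lam eps i j) = 1 ∧
    ∀ u : (Fin 2 × Fin 2) → ℂ, (∀ i, u i = 0 ∨ u i = 1) →
      0 ≤ star u ⬝ᵥ (Dmat lam eps).mulVec u := by
  refine ⟨Dmat_isHermitian lam eps, sum_sum_Dmat lam eps, fun u hu => ?_⟩
  have hsum : eps * (1 + lam) ≤ 1 := (le_div_iff₀ (by linarith)).mp heps'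
  have hA := star_dotProduct_Amat_mulVec_nonneg (lam := lam) (by linarith)
    (v := fun a => u (a, 0)) fun a => hu _
  have hB := star_dotProduct_one_sub_smul_Amat_mulVec_nonneg (by nlinarith) hsum
    (v := fun a => u (a, 1)) fun a => hu _
  have heps₀ : (0 : ℂ) ≤ eps := by exact_mod_cast heps.le
  rw [star_dotProduct_Dmat_mulVec]
  exact add_nonneg (mul_nonneg (by positivity) hA) (mul_nonneg (by positivity) hB)
end

section
/- Let n ≥ 1, λ > 0, ε > 0, A = [[1, λ], [λ, 1]], and D = (ε/2)·A ⊗ E00 + (1/2)·(I₂ − εA) ⊗ E11, a 4×4 matrix indexed by (a, b) ∈ {0,1}². Let V ∈ ℂ^(4^(n+1)) be the 0/1 vector V = e_{(0,0)}^{⊗n} ⊗ e_{(0,1)} + e_{(1,0)}^{⊗n} ⊗ e_{(1,1)}. Then ⟨V, D^{⊗(n+1)} V⟩ = (1/2^n)·ε^n·(1 − ε·(1 + λ^(n+1))). -/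
open Matrix BigOperators ComplexOrder Kronecker

/-- The `m`-fold Kronecker power `D^{⊗m}` of the 4×4 matrix `D`, with rows and
columns indexed by functions `Fin m → Fin 2 × Fin 2` via the standard
identification. -/
noncomputable def kronPowD (lam eps : ℝ) (m : ℕ) :
    Matrix (Fin m → Fin 2 × Fin 2) (Fin m → Fin 2 × Fin 2) ℂ :=
  Matrix.of fun f g => ∏ k, Dmat lam eps (f k) (g k)

/-- The 0/1 vector `V = e_{(0,0)}^{⊗n} ⊗ e_{(0,1)} + e_{(1,0)}^{⊗n} ⊗ e_{(1,1)}`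
in `ℂ^(4^(n+1))`. -/
def Vvec (n : ℕ) : (Fin (n + 1) → Fin 2 × Fin 2) → ℂ := fun f =>
  (if f = (fun k => if k = Fin.last n then ((0 : Fin 2), (1 : Fin 2)) else (0, 0))
    then 1 else 0) +
  (if f = (fun k => if k = Fin.last n then ((1 : Fin 2), (1 : Fin 2)) else (1, 0))
    then 1 else 0)

/-! `V` is the sum of the two basis vectors indexed by `f₀ = ((0,0),…,(0,0),(0,1))` and
`f₁ = ((1,0),…,(1,0),(1,1))`, so the quadratic form is the sum of the four entries
`D^{⊗(n+1)}(fᵢ, fⱼ)`. Each entry is a product over the tensor factors, equal to one entry of `D`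
raised to the `n`-th power times another entry of `D` for the last factor: the diagonal ones give
`(ε/2)^n · (1 - ε)/2` and the off-diagonal ones `(ελ/2)^n · (-ελ/2)`. -/

open Function

theorem star_single_add_single_dotProduct_mulVec {ι R : Type*} [Fintype ι] [DecidableEq ι]
    [NonAssocSemiring R] [StarRing R] (M : Matrix ι ι R) (i j : ι) :
    star (Pi.single i 1 + Pi.single j 1 : ι → R) ⬝ᵥ M *ᵥ (Pi.single i 1 + Pi.single j 1) =
      M i i + M i j + (M j i + M j j) := by
  simp only [star_add, ← Pi.single_star, star_one, add_dotProduct, mulVec_add,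
    dotProduct_add, single_one_dotProduct, mulVec_single_one, col_apply, add_add_add_comm]

theorem prod_update_const_last {M : Type*} [CommMonoid M] (n : ℕ) (c d : M) :
    ∏ k : Fin (n + 1), update (fun _ => c) (Fin.last n) d k = d * c ^ n := by
  simp [Finset.prod_update_of_mem, Finset.card_sdiff]

theorem kronPowD_update_last (n : ℕ) (lam eps : ℝ) (p p' q q' : Fin 2 × Fin 2) :
    kronPowD lam eps (n + 1) (update (fun _ => p) (Fin.last n) q)
      (update (fun _ => p') (Fin.last n) q') = Dmat lam eps q q' * Dmat lam eps p p' ^ n := by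
  simp only [kronPowD, of_apply, apply_update₂ (fun _ => Dmat lam eps), prod_update_const_last]

theorem Dmat_apply_zero_zero (lam eps : ℝ) (a a' : Fin 2) :
    Dmat lam eps (a, 0) (a', 0) = eps / 2 * Amat lam a a' := by
  simp [Dmat, E00, E11]

theorem Dmat_apply_one_one (lam eps : ℝ) (a a' : Fin 2) :
    Dmat lam eps (a, 1) (a', 1) =
      1 / 2 * ((1 : Matrix (Fin 2) (Fin 2) ℂ) a a' - eps * Amat lam a a') := by
  simp [Dmat, E00, E11]

theorem Vvec_eq_single_add_single (n : ℕ) :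
    Vvec n = Pi.single (update (fun _ => (0, 0)) (Fin.last n) (0, 1)) 1 +
      Pi.single (update (fun _ => (1, 0)) (Fin.last n) (1, 1)) 1 := by
  have ite_eq_update (a b : Fin 2 × Fin 2) :
      (fun k => if k = Fin.last n then b else a) = update (fun _ => a) (Fin.last n) b :=
    funext fun k => by rw [update_apply]
  funext f
  simp only [Vvec, Pi.add_apply, Pi.single_apply, ite_eq_update]

theorem quadratic_form_of_kronPow_at_V_general (n : ℕ)
    (lam eps : ℝ) :
    star (Vvec n) ⬝ᵥ (kronPowD lam eps (n + 1)).mulVec (Vvec n) =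
      ((1 / 2 ^ n * eps ^ n * (1 - eps * (1 + lam ^ (n + 1))) : ℝ) : ℂ) := by
  rw [Vvec_eq_single_add_single, star_single_add_single_dotProduct_mulVec]
  simp only [kronPowD_update_last, Dmat_apply_zero_zero, Dmat_apply_one_one]
  simp only [Amat, one_apply, of_apply, cons_val', cons_val_zero, cons_val_one, cons_val_fin_one,
    Fin.isValue, ↓reduceIte, zero_ne_one, one_ne_zero]
  push_cast [div_pow, mul_pow]
  ring

/-- For `n ≥ 1`, `λ > 0` and `ε > 0`, the quadratic form of `D^{⊗(n+1)}` at the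
0/1 vector `V` equals `(1/2^n)·ε^n·(1 − ε·(1 + λ^(n+1)))`. -/
theorem quadratic_form_of_kronPow_at_V (n : ℕ) (hn : 1 ≤ n)
    (lam eps : ℝ) (hlam : 0 < lam) (heps : 0 < eps) :
    star (Vvec n) ⬝ᵥ (kronPowD lam eps (n + 1)).mulVec (Vvec n) =
      ((1 / 2 ^ n * eps ^ n * (1 - eps * (1 + lam ^ (n + 1))) : ℝ) : ℂ) :=
  quadratic_form_of_kronPow_at_V_general n lam eps
end

section
/- For every integer n ≥ 1 there exists λ₀ > 1 such that for all real λ ≥ λ₀ the following holds: setting ε = 1/(λ^(n + 1/2) + 1), A = [[1, λ], [λ, 1]], and B = I₂ − εA, for all nonnegative integers n₁, n₂ with n₁ + n₂ = n and every 0/1 vector w ∈ ℂ^(2^n), one has ⟨w, (A^{⊗n₁} ⊗ B^{⊗n₂}) w⟩ ≥ 0. -/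
/-!
Write `ε = 1/(λ^(n+1/2) + 1)` and `B = I₂ − εA`. All entries of `A^{⊗n₁} ⊗ B^{⊗n₂}` are real.
Its diagonal entries are `(1 − ε)^{n₂} ≥ 2^{-n}`. An off-diagonal entry is nonnegative unless the
two indices differ in some `B`-factor; that factor is `−ελ` and every other factor has absolute
value at most `λ`, so the entry is at least `−ελ^n ≥ −λ^{-1/2}`. For `λ ≥ 16^n` the matrix is
therefore diagonally dominant in the sense that `2^n · ελ^n ≤ 2^{-n}`, which makes every row sum
over the support of a 0/1 vector nonnegative.
-/

open Matrix BigOperators ComplexOrder Kronecker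

/-- The `m`-fold Kronecker power of a 2×2 complex matrix, with rows and columns
indexed by functions `Fin m → Fin 2` (the 0-fold power is the 1×1 identity). -/
noncomputable def kronPow2 (M : Matrix (Fin 2) (Fin 2) ℂ) (m : ℕ) :
    Matrix (Fin m → Fin 2) (Fin m → Fin 2) ℂ :=
  Matrix.of fun f g => ∏ i, M (f i) (g i)

open Finset

theorem Matrix.star_dotProduct_mulVec_of_zero_one {ι R : Type*} [Fintype ι] [CommRing R]
    [StarRing R] [DecidableEq R] [Nontrivial R] (M : Matrix ι ι R) {w : ι → R}
    (hw : ∀ p, w p = 0 ∨ w p = 1) :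
    star w ⬝ᵥ M *ᵥ w = ∑ p with w p = 1, ∑ q with w q = 1, M p q := by
  simp only [dotProduct, mulVec, sum_filter, Pi.star_apply]
  refine sum_congr rfl fun p _ => ?_
  rcases hw p with h | h
  · simp [h]
  · simp only [h, star_one, one_mul, if_true]
    refine sum_congr rfl fun q _ => ?_
    rcases hw q with h' | h' <;> simp [h']

section DiagonallyDominant

variable {ι R : Type*} [Fintype ι] [DecidableEq ι] [CommRing R] [PartialOrder R]
  [IsOrderedRing R] {M : Matrix ι ι R} {c d : R}

theorem Matrix.sum_apply_nonneg_of_diag_ge (hc : 0 ≤ c) (hcd : (Fintype.card ι : R) * c ≤ d)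
    (hdiag : ∀ p, d ≤ M p p) (hoff : ∀ p q, p ≠ q → -c ≤ M p q) {s : Finset ι} {p : ι}
    (hp : p ∈ s) : 0 ≤ ∑ q ∈ s, M p q := by
  have hoff_sum : -(#(s.erase p) • c) ≤ ∑ q ∈ s.erase p, M p q := by
    rw [← smul_neg, ← sum_const]
    exact sum_le_sum fun q hq => hoff p q (ne_of_mem_erase hq).symm
  have hcard : #(s.erase p) • c ≤ d := by
    rw [nsmul_eq_mul]
    exact (mul_le_mul_of_nonneg_right (Nat.mono_cast (card_le_univ _)) hc).trans hcd
  rw [← add_sum_erase s _ hp]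
  calc (0 : R) ≤ d - #(s.erase p) • c := sub_nonneg.mpr hcard
    _ ≤ M p p + ∑ q ∈ s.erase p, M p q := by
      rw [sub_eq_add_neg]; exact add_le_add (hdiag p) hoff_sum

theorem Matrix.zero_le_star_dotProduct_mulVec_of_zero_one [StarRing R] [DecidableEq R]
    [Nontrivial R] (hc : 0 ≤ c) (hcd : (Fintype.card ι : R) * c ≤ d)
    (hdiag : ∀ p, d ≤ M p p) (hoff : ∀ p q, p ≠ q → -c ≤ M p q) {w : ι → R}
    (hw : ∀ p, w p = 0 ∨ w p = 1) : 0 ≤ star w ⬝ᵥ M *ᵥ w := by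
  rw [star_dotProduct_mulVec_of_zero_one M hw]
  exact sum_nonneg fun p hp => sum_apply_nonneg_of_diag_ge hc hcd hdiag hoff hp

end DiagonallyDominant

theorem abs_prod_le_mul_pow {ι : Type*} [Fintype ι] [DecidableEq ι] {x : ι → ℝ} {a b : ℝ}
    (i₀ : ι) (hx : ∀ i, |x i| ≤ a) (hx₀ : |x i₀| ≤ b * a) :
    |∏ i, x i| ≤ b * a ^ Fintype.card ι := by
  calc |∏ i, x i| = ∏ i, |x i| := abs_prod _ _
    _ ≤ ∏ i, (if i = i₀ then b else 1) * a :=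
      prod_le_prod (fun i _ => abs_nonneg _) fun i _ => by
        split_ifs with h
        · exact h ▸ hx₀
        · simpa using hx i
    _ = b * a ^ Fintype.card ι := by
      rw [prod_mul_distrib, Fintype.prod_ite_eq', prod_const, card_univ]

theorem one_div_rpow_add_one_le_half {x : ℝ} (hx : 1 ≤ x) {y : ℝ} (hy : 0 ≤ y) :
    1 / (x ^ y + 1) ≤ 1 / 2 := by
  have := Real.one_le_rpow hx hy
  rw [div_le_div_iff₀ (by linarith) two_pos]
  linarith

theorem one_div_rpow_add_half_add_one_mul_pow_le {lam : ℝ} (hlam : 0 < lam) (n : ℕ) :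
    1 / (lam ^ ((n : ℝ) + 1 / 2) + 1) * lam ^ n ≤ 1 / √lam := by
  rw [Real.rpow_add hlam, Real.rpow_natCast, ← Real.sqrt_eq_rpow]
  have : 0 < √lam := Real.sqrt_pos.mpr hlam
  rw [one_div_mul_eq_div, div_le_div_iff₀ (by positivity) this]
  nlinarith [pow_pos hlam n]

theorem two_pow_mul_one_div_rpow_add_one_mul_pow_le {n : ℕ} {lam : ℝ} (hlam : 16 ^ n ≤ lam) :
    2 ^ n * (1 / (lam ^ ((n : ℝ) + 1 / 2) + 1) * lam ^ n) ≤ (1 / 2) ^ n := by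
  have hlam0 : 0 < lam := lt_of_lt_of_le (by positivity) hlam
  have hsqrt : (4 : ℝ) ^ n ≤ √lam := by
    rw [Real.le_sqrt (by positivity) hlam0.le, ← pow_mul, mul_comm, pow_mul]
    norm_num [hlam]
  calc 2 ^ n * (1 / (lam ^ ((n : ℝ) + 1 / 2) + 1) * lam ^ n) ≤ 2 ^ n * (1 / √lam) :=
        mul_le_mul_of_nonneg_left (one_div_rpow_add_half_add_one_mul_pow_le hlam0 n)
          (by positivity)
    _ ≤ 2 ^ n * (1 / 4 ^ n) := by gcongr
    _ = (1 / 2) ^ n := by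
      rw [← div_eq_mul_one_div, ← div_pow]
      norm_num

def Areal (lam : ℝ) : Matrix (Fin 2) (Fin 2) ℝ :=
  of fun a b => if a = b then 1 else lam

def blockMatrix (lam ε : ℝ) (n₁ n₂ : ℕ) :
    Matrix ((Fin n₁ → Fin 2) × (Fin n₂ → Fin 2)) ((Fin n₁ → Fin 2) × (Fin n₂ → Fin 2)) ℝ :=
  of fun p q => (∏ i, Areal lam (p.1 i) (q.1 i)) * ∏ i, (1 - ε • Areal lam) (p.2 i) (q.2 i)

section Entries

variable {lam ε : ℝ}

theorem Areal_apply (lam : ℝ) (a b : Fin 2) : Areal lam a b = if a = b then 1 else lam := rfl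

theorem Areal_apply_self (lam : ℝ) (a : Fin 2) : Areal lam a a = 1 := if_pos rfl

theorem Areal_apply_nonneg (hlam : 0 ≤ lam) (a b : Fin 2) : 0 ≤ Areal lam a b := by
  rw [Areal_apply]; split_ifs <;> simp [hlam]

theorem abs_Areal_apply_le (hlam : 1 ≤ lam) (a b : Fin 2) : |Areal lam a b| ≤ lam := by
  rw [Areal_apply]; split_ifs <;> simp [abs_of_nonneg (zero_le_one.trans hlam), hlam]

theorem one_sub_smul_Areal_apply_self (a : Fin 2) : (1 - ε • Areal lam) a a = 1 - ε := by
  simp [Areal]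

theorem abs_one_sub_smul_Areal_apply_le (hε0 : 0 ≤ ε) (hε1 : ε ≤ 1) (hlam : 1 ≤ lam)
    (a b : Fin 2) : |(1 - ε • Areal lam) a b| ≤ lam := by
  by_cases h : a = b
  · subst h
    rw [one_sub_smul_Areal_apply_self, abs_of_nonneg (by linarith)]
    linarith
  · simp [Areal, h, one_apply, abs_of_nonneg hε0, abs_of_nonneg (zero_le_one.trans hlam)]
    nlinarith

theorem abs_one_sub_smul_Areal_apply_of_ne (hε0 : 0 ≤ ε) (hlam : 0 ≤ lam) {a b : Fin 2}
    (h : a ≠ b) : |(1 - ε • Areal lam) a b| ≤ ε * lam := by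
  simp [Areal, h, one_apply, abs_of_nonneg hε0, abs_of_nonneg hlam]

variable {n₁ n₂ : ℕ}

theorem blockMatrix_apply_self (p : (Fin n₁ → Fin 2) × (Fin n₂ → Fin 2)) :
    blockMatrix lam ε n₁ n₂ p p = (1 - ε) ^ n₂ := by
  simp [blockMatrix, Areal_apply_self]

theorem neg_mul_pow_le_blockMatrix_apply (hε0 : 0 ≤ ε) (hε1 : ε ≤ 1) (hlam : 1 ≤ lam)
    (p q : (Fin n₁ → Fin 2) × (Fin n₂ → Fin 2)) :
    -(ε * lam ^ (n₁ + n₂)) ≤ blockMatrix lam ε n₁ n₂ p q := by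
  have hlam0 : 0 ≤ lam := zero_le_one.trans hlam
  by_cases h₂ : p.2 = q.2
  · have hA : 0 ≤ ∏ i, Areal lam (p.1 i) (q.1 i) :=
      prod_nonneg fun i _ => Areal_apply_nonneg hlam0 _ _
    have hB : 0 ≤ ∏ i, (1 - ε • Areal lam) (p.2 i) (q.2 i) := prod_nonneg fun i _ => by
      rw [h₂, one_sub_smul_Areal_apply_self]
      linarith
    exact (neg_nonpos.mpr (by positivity)).trans (mul_nonneg hA hB)
  · obtain ⟨i₀, hi₀⟩ := Function.ne_iff.mp h₂
    have hA : |∏ i, Areal lam (p.1 i) (q.1 i)| ≤ lam ^ n₁ := by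
      rw [abs_prod]
      exact (prod_le_prod (fun _ _ => abs_nonneg _)
        fun i _ => abs_Areal_apply_le hlam _ _).trans_eq (by simp)
    have hB : |∏ i, (1 - ε • Areal lam) (p.2 i) (q.2 i)| ≤ ε * lam ^ n₂ := by
      simpa using abs_prod_le_mul_pow i₀
        (fun i => abs_one_sub_smul_Areal_apply_le hε0 hε1 hlam _ _)
        (abs_one_sub_smul_Areal_apply_of_ne hε0 hlam0 hi₀)
    refine neg_le_of_abs_le ?_
    rw [blockMatrix, of_apply, abs_mul, pow_add]
    calc _ ≤ lam ^ n₁ * (ε * lam ^ n₂) := mul_le_mul hA hB (abs_nonneg _) (by positivity)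
      _ = _ := by ring

end Entries

theorem Amat_eq_map (lam : ℝ) : Amat lam = (Areal lam).map (↑) := by
  ext a b
  fin_cases a <;> fin_cases b <;> simp [Amat, Areal]

theorem one_sub_smul_Amat_eq_map (lam ε : ℝ) :
    1 - (ε : ℂ) • Amat lam = (1 - ε • Areal lam).map (↑) := by
  rw [Amat_eq_map]
  ext a b
  by_cases h : a = b <;> simp [h, one_apply]

theorem kronPow2_map_ofReal_apply (M : Matrix (Fin 2) (Fin 2) ℝ) {m : ℕ}
    (f g : Fin m → Fin 2) :
    kronPow2 (M.map (↑)) m f g = ((∏ i, M (f i) (g i) : ℝ) : ℂ) := by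
  simp [kronPow2]

theorem kronecker_kronPow2_eq_map_blockMatrix (lam ε : ℝ) (n₁ n₂ : ℕ) :
    kronPow2 (Amat lam) n₁ ⊗ₖ kronPow2 (1 - (ε : ℂ) • Amat lam) n₂ =
      (blockMatrix lam ε n₁ n₂).map (↑) := by
  ext p q
  rw [one_sub_smul_Amat_eq_map, Amat_eq_map, kroneckerMap_apply, kronPow2_map_ofReal_apply,
    kronPow2_map_ofReal_apply, map_apply, blockMatrix, of_apply, Complex.ofReal_mul]

/-- For every `n ≥ 1` there is `λ₀ > 1` such that for all `λ ≥ λ₀`, setting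
`ε = 1/(λ^(n+1/2) + 1)`, `A = [[1, λ], [λ, 1]]` and `B = I₂ − εA`, the quadratic
form of `A^{⊗n₁} ⊗ B^{⊗n₂}` is a nonnegative real number at every 0/1 vector,
for all `n₁ + n₂ = n`. -/
theorem exists_lambda_blocks_nonneg (n : ℕ) (hn : 1 ≤ n) :
    ∃ lam₀ : ℝ, 1 < lam₀ ∧ ∀ lam : ℝ, lam₀ ≤ lam →
      ∀ n₁ n₂ : ℕ, n₁ + n₂ = n →
        ∀ w : ((Fin n₁ → Fin 2) × (Fin n₂ → Fin 2)) → ℂ,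
          (∀ i, w i = 0 ∨ w i = 1) →
          0 ≤ star w ⬝ᵥ
            ((kronPow2 (Amat lam) n₁) ⊗ₖ
              (kronPow2
                (1 - ((1 / (lam ^ ((n : ℝ) + 1 / 2) + 1) : ℝ) : ℂ) • Amat lam)
                n₂)).mulVec w := by
  refine ⟨16 ^ n, one_lt_pow₀ (by norm_num) (by omega), fun lam hlam n₁ n₂ hn₁₂ w hw => ?_⟩
  set ε : ℝ := 1 / (lam ^ ((n : ℝ) + 1 / 2) + 1)
  have hlam1 : 1 ≤ lam := (one_le_pow₀ (by norm_num)).trans hlam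
  have hε0 : 0 ≤ ε := by have := zero_le_one.trans hlam1; positivity
  have hε : ε ≤ 1 / 2 := one_div_rpow_add_one_le_half hlam1 (by positivity)
  have hcard : Fintype.card ((Fin n₁ → Fin 2) × (Fin n₂ → Fin 2)) = 2 ^ n := by
    simp [← pow_add, hn₁₂]
  rw [kronecker_kronPow2_eq_map_blockMatrix]
  refine zero_le_star_dotProduct_mulVec_of_zero_one (c := ((ε * lam ^ n : ℝ) : ℂ))
    (d := (((1 / 2) ^ n : ℝ) : ℂ)) (mod_cast by positivity)
    (by rw [hcard]; exact_mod_cast two_pow_mul_one_div_rpow_add_one_mul_pow_le hlam)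
    (fun p => ?_) (fun p q _ => ?_) hw
  · rw [map_apply, blockMatrix_apply_self, Complex.real_le_real]
    calc ((1 : ℝ) / 2) ^ n ≤ (1 / 2) ^ n₂ :=
          pow_le_pow_of_le_one (by norm_num) (by norm_num) (by omega)
      _ ≤ (1 - ε) ^ n₂ := pow_le_pow_left₀ (by norm_num) (by linarith) n₂
  · rw [map_apply, ← Complex.ofReal_neg, Complex.real_le_real, ← hn₁₂]
    exact neg_mul_pow_le_blockMatrix_apply hε0 (by linarith) hlam1 p q
end

section
/- Let m ≥ 1 and let v ∈ ℂ^m be a unit vector. On ℂ^m define the projectors E_a = e_a e_a† for a = 0, …, m−1, F₀ = (1/m)·J (where J is the m×m all-ones matrix), and F₁ = I_m − F₀. Then the 2m×2m matrix, indexed by pairs (a, b) ∈ {0,…,m−1} × {0,1}, whose ((a,b),(a′,b′)) entry is ⟨v, E_{a′} F_{b′} F_b E_a v⟩, equals (1/m)·(v v†) ⊗ E00 + (diag(|v₀|², …, |v_{m−1}|²) − (1/m)·v v†) ⊗ E11. -/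
open Matrix BigOperators ComplexOrder Kronecker

/-- The rank-one projector `E_a = e_a e_a†` onto the `a`-th computational basis
vector of `ℂ^m`. -/
def Eproj {m : ℕ} (a : Fin m) : Matrix (Fin m) (Fin m) ℂ :=
  Matrix.of fun i j => if i = a ∧ j = a then 1 else 0

/-- The projectors `F₀ = (1/m)·J` (where `J` is the all-ones matrix) and
`F₁ = I_m − F₀` on `ℂ^m`. -/
noncomputable def Fproj (m : ℕ) : Fin 2 → Matrix (Fin m) (Fin m) ℂ :=
  ![(1 / (m : ℂ)) • Matrix.of (fun _ _ => 1),
    1 - (1 / (m : ℂ)) • Matrix.of (fun _ _ => 1)]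

lemma sandwich {m : ℕ} (a a' : Fin m) (M : Matrix (Fin m) (Fin m) ℂ) (v : Fin m → ℂ) :
    star v ⬝ᵥ (Eproj a' * M * Eproj a).mulVec v = star (v a') * M a' a * v a := by
  simp only [dotProduct, mulVec, Matrix.mul_apply, Eproj, Matrix.of_apply, Pi.star_apply]
  simp [ite_and, Finset.sum_ite_eq, Finset.sum_ite_eq', mul_comm, mul_assoc, mul_left_comm]

lemma hF00 {m : ℕ} (hm0 : (m : ℂ) ≠ 0) : Fproj m 0 * Fproj m 0 = Fproj m 0 := by
  ext i j
  simp [Fproj, Matrix.mul_apply, Finset.sum_const, Finset.card_univ]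
  field_simp

lemma hF01 {m : ℕ} (hm0 : (m : ℂ) ≠ 0) : Fproj m 0 * Fproj m 1 = 0 := by
  have h := hF00 hm0
  simp only [Fproj] at *
  simp only [Matrix.cons_val_zero, Matrix.cons_val_one, Matrix.head_cons] at *
  rw [Matrix.mul_sub, Matrix.mul_one, h, sub_self]

lemma hF10 {m : ℕ} (hm0 : (m : ℂ) ≠ 0) : Fproj m 1 * Fproj m 0 = 0 := by
  have h := hF00 hm0
  simp only [Fproj] at *
  simp only [Matrix.cons_val_zero, Matrix.cons_val_one, Matrix.head_cons] at *
  rw [Matrix.sub_mul, Matrix.one_mul, h, sub_self]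

lemma hF11 {m : ℕ} (hm0 : (m : ℂ) ≠ 0) : Fproj m 1 * Fproj m 1 = Fproj m 1 := by
  have h := hF00 hm0
  simp only [Fproj] at *
  simp only [Matrix.cons_val_zero, Matrix.cons_val_one, Matrix.head_cons] at *
  rw [Matrix.sub_mul, Matrix.one_mul, Matrix.mul_sub, Matrix.mul_one, h, sub_self, sub_zero]

lemma F0_apply {m : ℕ} (i j : Fin m) : Fproj m 0 i j = (m : ℂ)⁻¹ := by
  simp [Fproj]

lemma F1_apply {m : ℕ} (i j : Fin m) :
    Fproj m 1 i j = (if i = j then 1 else 0) - (m : ℂ)⁻¹ := by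
  simp [Fproj, Matrix.one_apply, Matrix.sub_apply]

/-- For a unit vector `v ∈ ℂ^m`, the `2m × 2m` matrix with
`((a,b),(a',b'))` entry `⟨v, E_{a'} F_{b'} F_b E_a v⟩` equals
`(1/m)·(v v†) ⊗ E00 + (diag(|v₀|²,…,|v_{m−1}|²) − (1/m)·v v†) ⊗ E11`. -/
theorem quantum_DF_matrix_form (m : ℕ) (hm : 1 ≤ m)
    (v : Fin m → ℂ) (hv : star v ⬝ᵥ v = 1) :
    (Matrix.of fun (p q : Fin m × Fin 2) =>
        star v ⬝ᵥ (Eproj q.1 * Fproj m q.2 * Fproj m p.2 * Eproj p.1).mulVec v) =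
      (1 / (m : ℂ)) • ((vecMulVec v (star v)) ⊗ₖ E00) +
        ((Matrix.diagonal fun a => ((Complex.normSq (v a) : ℝ) : ℂ)) -
            (1 / (m : ℂ)) • vecMulVec v (star v)) ⊗ₖ E11 := by
  have hm0 : (m : ℂ) ≠ 0 := Nat.cast_ne_zero.mpr (by omega)
  ext ⟨a, b⟩ ⟨a', b'⟩
  have key : Eproj a' * Fproj m b' * Fproj m b * Eproj a
      = Eproj a' * (Fproj m b' * Fproj m b) * Eproj a := by
    rw [Matrix.mul_assoc (Eproj a'), Matrix.mul_assoc, Matrix.mul_assoc]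
  rw [Matrix.of_apply, key, sandwich]
  have hcs : ((Complex.normSq (v a) : ℝ) : ℂ) = star (v a) * v a := by
    rw [Complex.normSq_eq_conj_mul_self]; rfl
  fin_cases b <;> fin_cases b' <;>
    simp only [Fin.zero_eta, Fin.mk_one, Fin.isValue, hF00 hm0, hF01 hm0, hF10 hm0, hF11 hm0,
      Matrix.add_apply, Matrix.smul_apply, Matrix.kroneckerMap_apply, Matrix.sub_apply,
      Matrix.zero_apply, vecMulVec_apply, Matrix.diagonal_apply, E00, E11,
      Matrix.cons_val_zero, Matrix.cons_val_one, Matrix.head_cons, Matrix.cons_val',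
      Matrix.head_fin_const, Matrix.empty_val', Matrix.cons_val_fin_one, smul_eq_mul,
      mul_zero, mul_one, zero_mul, add_zero, zero_add, sub_zero, zero_sub, hcs,
      F0_apply, F1_apply, Matrix.of_apply, Pi.star_apply]
  · ring
  · split_ifs with h1 h2 h2
    · subst h1; ring
    · exact absurd h1.symm h2
    · exact absurd h2.symm h1
    · ring
end

section
/- Let m ≥ 1 and let v ∈ ℂ^m be a unit vector. Then the m×m Hermitian matrix diag(|v₀|², …, |v_{m−1}|²) − (1/m)·v v† is positive semidefinite. Consequently, the 2m×2m matrix D_v = (1/m)·(v v†) ⊗ E00 + (diag(|v₀|², …, |v_{m−1}|²) − (1/m)·v v†) ⊗ E11 is positive semidefinite, Hermitian, and its entries sum to 1; i.e., D_v is a strongly positive decoherence functional. -/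
/-!
With `P = diag(v)` and the centering matrix `C = I − (1/m)·J` (`J` the all-ones matrix),
`diag(|vₐ|²) − (1/m)·v v† = P C P†`. Since `J² = m·J`, `C` is a Hermitian idempotent, so
`C = C† C ⪰ 0`, and conjugation preserves positivity. `D_v` is then a nonnegative combination
of Kronecker products of positive semidefinite matrices. Each of `E00`, `E11` has entry sum `1`,
so the entry sum of `D_v` is that of `(1/m)·v v† + (diag(|vₐ|²) − (1/m)·v v†)`, namely `‖v‖² = 1`.
-/

open Matrix BigOperators ComplexOrder Kronecker

/-- The `2m × 2m` matrix
`D_v = (1/m)·(v v†) ⊗ E00 + (diag(|v₀|²,…,|v_{m−1}|²) − (1/m)·v v†) ⊗ E11`,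
indexed by `Fin m × Fin 2`. -/
noncomputable def Dv {m : ℕ} (v : Fin m → ℂ) :
    Matrix (Fin m × Fin 2) (Fin m × Fin 2) ℂ :=
  (1 / (m : ℂ)) • ((vecMulVec v (star v)) ⊗ₖ E00) +
    ((Matrix.diagonal fun a => ((Complex.normSq (v a) : ℝ) : ℂ)) -
        (1 / (m : ℂ)) • vecMulVec v (star v)) ⊗ₖ E11

namespace Matrix

theorem sum_sum_kronecker_apply {R l m n p : Type*} [CommSemiring R] [Fintype l] [Fintype m]
    [Fintype n] [Fintype p] (A : Matrix l m R) (B : Matrix n p R) :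
    ∑ i, ∑ j, (A ⊗ₖ B) i j = (∑ i, ∑ j, A i j) * ∑ k, ∑ l, B k l := by
  simp [Fintype.sum_prod_type, kroneckerMap_apply, Finset.sum_mul_sum]

variable (n 𝕜 : Type*) [Fintype n] [DecidableEq n] [RCLike 𝕜]

noncomputable def centeringMatrix : Matrix n n 𝕜 :=
  1 - (Fintype.card n : 𝕜)⁻¹ • of fun _ _ => 1

variable {n 𝕜}

theorem centeringMatrix_isHermitian : (centeringMatrix n 𝕜).IsHermitian := by
  ext i j
  simp [centeringMatrix, one_apply, eq_comm]

theorem centeringMatrix_mul_self :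
    centeringMatrix n 𝕜 * centeringMatrix n 𝕜 = centeringMatrix n 𝕜 := by
  have ones_mul_ones : (of fun _ _ => 1 : Matrix n n 𝕜) * (of fun _ _ => 1) =
      (Fintype.card n : 𝕜) • of fun _ _ => 1 := by
    ext i j
    simp [mul_apply]
  have inv_mul_inv_mul : (Fintype.card n : 𝕜)⁻¹ * (Fintype.card n : 𝕜)⁻¹ * Fintype.card n =
      (Fintype.card n : 𝕜)⁻¹ := by
    rcases eq_or_ne (Fintype.card n : 𝕜) 0 with h | h
    · simp [h]
    · exact inv_mul_cancel_right₀ h _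
  rw [centeringMatrix]
  simp only [sub_mul, mul_sub, one_mul, mul_one, smul_mul_smul_comm, ones_mul_ones, smul_smul,
    inv_mul_inv_mul]
  module

theorem centeringMatrix_posSemidef : (centeringMatrix n 𝕜).PosSemidef := by
  have h : centeringMatrix n 𝕜 = (centeringMatrix n 𝕜)ᴴ * centeringMatrix n 𝕜 := by
    rw [centeringMatrix_isHermitian.eq, centeringMatrix_mul_self]
  exact h ▸ posSemidef_conjTranspose_mul_self _

theorem diagonal_mul_centeringMatrix_mul_conjTranspose (v : n → 𝕜) :
    diagonal v * centeringMatrix n 𝕜 * (diagonal v)ᴴ =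
      diagonal (v * star v) - (Fintype.card n : 𝕜)⁻¹ • vecMulVec v (star v) := by
  ext i j
  rw [diagonal_conjTranspose, mul_diagonal, diagonal_mul]
  simp [centeringMatrix, diagonal_apply, one_apply, vecMulVec_apply]
  split_ifs with h <;> [subst h; skip] <;> ring

end Matrix

theorem posSemidef_diagonal_normSq_sub_smul_vecMulVec {m : ℕ} (v : Fin m → ℂ) :
    ((diagonal fun a => ((Complex.normSq (v a) : ℝ) : ℂ)) -
        (1 / (m : ℂ)) • vecMulVec v (star v)).PosSemidef := by
  have h := centeringMatrix_posSemidef.mul_mul_conjTranspose_same (diagonal v)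
  have hv : v * star v = fun a => ((Complex.normSq (v a) : ℝ) : ℂ) := by
    funext a
    exact Complex.mul_conj (v a)
  rwa [diagonal_mul_centeringMatrix_mul_conjTranspose, Fintype.card_fin, ← one_div, hv] at h

theorem E00_posSemidef : E00.PosSemidef := by
  have h : E00 = diagonal ![1, 0] := by
    ext i j
    fin_cases i <;> fin_cases j <;> rfl
  refine h ▸ PosSemidef.diagonal fun i => ?_
  fin_cases i <;> simp

theorem E11_posSemidef : E11.PosSemidef := by
  have h : E11 = diagonal ![0, 1] := by
    ext i j
    fin_cases i <;> fin_cases j <;> rfl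
  refine h ▸ PosSemidef.diagonal fun i => ?_
  fin_cases i <;> simp

theorem sum_sum_kronecker_E00_add_kronecker_E11 {m : Type*} [Fintype m]
    (A B : Matrix m m ℂ) : ∑ p, ∑ q, (A ⊗ₖ E00 + B ⊗ₖ E11) p q = ∑ a, ∑ b, (A + B) a b := by
  have sum_E00 : ∑ i, ∑ j, E00 i j = 1 := by simp [E00, Fin.sum_univ_two]
  have sum_E11 : ∑ i, ∑ j, E11 i j = 1 := by simp [E11, Fin.sum_univ_two]
  simp only [Matrix.add_apply, Finset.sum_add_distrib, sum_sum_kronecker_apply, sum_E00, sum_E11,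
    mul_one]

theorem Dv_posSemidef {m : ℕ} (v : Fin m → ℂ) : (Dv v).PosSemidef :=
  ((posSemidef_vecMulVec_self_star v).kronecker E00_posSemidef).smul
    (one_div_nonneg.mpr (Nat.cast_nonneg m)) |>.add
    ((posSemidef_diagonal_normSq_sub_smul_vecMulVec v).kronecker E11_posSemidef)

theorem sum_sum_Dv {m : ℕ} (v : Fin m → ℂ) : ∑ p, ∑ q, Dv v p q = star v ⬝ᵥ v := by
  rw [Dv, ← smul_kronecker, sum_sum_kronecker_E00_add_kronecker_E11, add_sub_cancel]
  simp [diagonal_apply, dotProduct, Complex.normSq_eq_conj_mul_self]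

theorem Dv_is_strongly_positive_DF_general (m : ℕ)
    (v : Fin m → ℂ) (hv : star v ⬝ᵥ v = 1) :
    ((Matrix.diagonal fun a => ((Complex.normSq (v a) : ℝ) : ℂ)) -
        (1 / (m : ℂ)) • vecMulVec v (star v)).PosSemidef ∧
    (Dv v).PosSemidef ∧ (Dv v).IsHermitian ∧
    (∑ p, ∑ q, Dv v p q) = 1 :=
  ⟨posSemidef_diagonal_normSq_sub_smul_vecMulVec v, Dv_posSemidef v, (Dv_posSemidef v).isHermitian,
    (sum_sum_Dv v).trans hv⟩

/-- For a unit vector `v ∈ ℂ^m`, the matrix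
`diag(|v₀|²,…,|v_{m−1}|²) − (1/m)·v v†` is positive semidefinite; consequently
`D_v` is positive semidefinite, Hermitian, and its entries sum to `1`, i.e.
`D_v` is a strongly positive decoherence functional. -/
theorem Dv_is_strongly_positive_DF (m : ℕ) (hm : 1 ≤ m)
    (v : Fin m → ℂ) (hv : star v ⬝ᵥ v = 1) :
    ((Matrix.diagonal fun a => ((Complex.normSq (v a) : ℝ) : ℂ)) -
        (1 / (m : ℂ)) • vecMulVec v (star v)).PosSemidef ∧
    (Dv v).PosSemidef ∧ (Dv v).IsHermitian ∧
    (∑ p, ∑ q, Dv v p q) = 1 :=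
  Dv_is_strongly_positive_DF_general m v hv
end

section
/- Let M be an s×s Hermitian complex matrix such that the real part of some entry M_{bc} is strictly negative. Then there exists a 2×2 Hermitian matrix D′ all of whose entries are nonnegative real numbers, and a 0/1 vector u ∈ ℂ^(2s), such that ⟨u, (M ⊗ D′) u⟩ < 0. Hence the set of Hermitian matrices with nonnegative entries cannot be extended by any Hermitian matrix whose real part has a negative entry while remaining closed under the positivity requirement on 0/1 vectors for Kronecker products. -/
open Matrix BigOperators ComplexOrder Kronecker

/-- If `M` is an `s × s` Hermitian complex matrix such that the real part of
some entry is strictly negative, then there is a 2×2 Hermitian matrix `D'` all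
of whose entries are nonnegative reals and a 0/1 vector `u ∈ ℂ^(2s)` such that
the quadratic form of the Kronecker product `M ⊗ D'` at `u` is a negative real
number. Hence the set of Hermitian matrices with nonnegative entries cannot be
extended by such an `M` while remaining closed under the 0/1-positivity
requirement for Kronecker products. -/
theorem nonneg_entry_matrices_maximal (s : ℕ)
    (M : Matrix (Fin s) (Fin s) ℂ) (hM : M.IsHermitian)
    (hneg : ∃ b c, (M b c).re < 0) :
    ∃ D' : Matrix (Fin 2) (Fin 2) ℂ, D'.IsHermitian ∧ (∀ i j, 0 ≤ D' i j) ∧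
      ∃ u : (Fin s × Fin 2) → ℂ, (∀ i, u i = 0 ∨ u i = 1) ∧
        star u ⬝ᵥ (M ⊗ₖ D').mulVec u < 0 := by
  obtain ⟨b, c, hbc⟩ := hneg
  refine ⟨!![0, 1; 1, 0], ?_, ?_, ?_⟩
  · ext i j
    fin_cases i <;> fin_cases j <;> simp [conjTranspose_apply]
  · intro i j
    fin_cases i <;> fin_cases j <;> norm_num
  · set u : (Fin s × Fin 2) → ℂ := fun ip =>
      (if ip = (b, 0) then 1 else 0) + (if ip = (c, 1) then 1 else 0) with hu
    have hne : ((b, (0 : Fin 2)) : Fin s × Fin 2) ≠ (c, 1) := by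
      simp [Prod.ext_iff]
    refine ⟨u, ?_, ?_⟩
    · intro i
      by_cases h1 : i = (b, 0)
      · right; simp [hu, h1, hne]
      · by_cases h2 : i = (c, 1)
        · right; simp [hu, h1, h2]
        · left; simp [hu, h1, h2]
    · have hstar : star u = u := by
        funext i
        by_cases h1 : i = (b, 0) <;> by_cases h2 : i = (c, 1) <;>
          simp [hu, h1, h2]
      have key : star u ⬝ᵥ (M ⊗ₖ !![(0:ℂ), 1; 1, 0]).mulVec u
          = M b c + M c b := by
        rw [hstar]
        simp only [dotProduct, mulVec, hu, add_mul, mul_add, mul_ite, ite_mul,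
          mul_one, mul_zero, one_mul, zero_mul, Finset.sum_add_distrib,
          Finset.sum_ite_eq', Finset.mem_univ, if_true]
        simp [kroneckerMap_apply, hne, hne.symm]
        ring
      rw [key]
      have hcb : M c b = star (M b c) := (hM.apply c b).symm
      have : M b c + M c b = ((2 * (M b c).re : ℝ) : ℂ) := by
        rw [hcb, Complex.star_def, Complex.add_conj]
      rw [this]
      have : (2 * (M b c).re : ℝ) < 0 := by linarith
      exact_mod_cast this
end
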